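/- Let G ⊂ PGL₂(ℂ) × PGL₃(ℂ) be the subgroup preserving γ_c = {x₁y₁² + x₂y₂² = 0, y₃ = 0} ⊂ P¹ × P², and let m = {y₁ = y₂} ⊂ P². An element (A, B) ∈ G preserves the line m if and only if it is represented by matrices of the form (a) A = I₂, B = [[1,0,b₁],[0,1,b₁],[0,0,a₂]], or (b) A = [[0,1],[1,0]], B = [[0,1,b₁],[1,0,b₁],[0,0,a₂]], where a₂ ∈ ℂ* and b₁ ∈ ℂ. These elements form a subgroup Γ isomorphic to (ℤ/2 × G_a) ⋊ G_m, generated by: the G_m-elements (I₂, diag(1,1,a)) for a ∈ ℂ*, the G_a-elements (I₂, [[1,0,b],[0,1,b],[0,0,1]]) for b ∈ ℂ, and the involution ([[0,1],[1,0]], [[0,1,0],[1,0,0],[0,0,1]]). -/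

import Mathlib

/-!
Statement 8: the subgroup `Γ ⊂ G` of elements preserving the line `m = {y₁ = y₂} ⊂ ℙ²`:
characterization by explicit matrices, `Γ ≅ (ℤ/2 × G_a) ⋊ G_m`, and generators.

We realize everything at the level of `GL`-lifts: an element of `PGL₂ × PGL₃` is
represented by a pair of matrices iff any lift is a pair of nonzero scalar multiples of
them.  Thus `G` is the set of lifts of elements of the form (i)/(ii) of Statement 6,
`Γ` the set of lifts of the forms (a)/(b) below; the quotient of the subgroup `Γ` by
the scalar pairs (which is `Γ` as a subgroup of `PGL₂ × PGL₃`) is isomorphic to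
`(ℤ/2 × G_a) ⋊ G_m`.
-/

noncomputable section
open scoped Matrix

/-- The complex projective plane. -/
abbrev P2C : Type := Projectivization ℂ (Fin 3 → ℂ)

/-- The action of an invertible matrix on projective space. -/
def matAct {n : ℕ} (A : GL (Fin n) ℂ) :
    Projectivization ℂ (Fin n → ℂ) → Projectivization ℂ (Fin n → ℂ) :=
  Projectivization.map ((A : Matrix (Fin n) (Fin n) ℂ).mulVecLin) (by
    intro x y h
    have h2 := congrArg (fun v => (↑(A⁻¹) : Matrix (Fin n) (Fin n) ℂ) *ᵥ v) h
    simp only [Matrix.mulVecLin_apply, Matrix.mulVec_mulVec] at h2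
    rw [A.inv_mul] at h2
    simpa using h2)

/-- The group `G` preserving `γ_c`, described by its explicit matrix lifts (the forms
(i) and (ii) of Corollary 2.5). -/
def Ggrp : Set (GL (Fin 2) ℂ × GL (Fin 3) ℂ) :=
  {g | ∃ (a₁ a₂ b₁ b₂ c d : ℂ), a₁ ≠ 0 ∧ a₂ ≠ 0 ∧ c ≠ 0 ∧ d ≠ 0 ∧
    (((g.1 : Matrix (Fin 2) (Fin 2) ℂ) = c • !![a₁ ^ 2, 0; 0, 1] ∧
      (g.2 : Matrix (Fin 3) (Fin 3) ℂ) = d • !![1, 0, b₁; 0, a₁, b₂; 0, 0, a₂]) ∨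
     ((g.1 : Matrix (Fin 2) (Fin 2) ℂ) = c • !![0, a₁ ^ 2; 1, 0] ∧
      (g.2 : Matrix (Fin 3) (Fin 3) ℂ) = d • !![0, 1, b₁; a₁, 0, b₂; 0, 0, a₂]))}

/-- The line `m = {y₁ = y₂} ⊂ ℙ²`. -/
def mline : Set P2C := {y | y.rep 0 = y.rep 1}

/-- The set of lifts of elements of the forms (a) and (b): this is the set `Γ` of the
statement. -/
def ΓSet : Set (GL (Fin 2) ℂ × GL (Fin 3) ℂ) :=
  {g | ∃ (a₂ b₁ c d : ℂ), a₂ ≠ 0 ∧ c ≠ 0 ∧ d ≠ 0 ∧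
    (((g.1 : Matrix (Fin 2) (Fin 2) ℂ) = c • (1 : Matrix (Fin 2) (Fin 2) ℂ) ∧
      (g.2 : Matrix (Fin 3) (Fin 3) ℂ) = d • !![1, 0, b₁; 0, 1, b₁; 0, 0, a₂]) ∨
     ((g.1 : Matrix (Fin 2) (Fin 2) ℂ) = c • !![0, 1; 1, 0] ∧
      (g.2 : Matrix (Fin 3) (Fin 3) ℂ) = d • !![0, 1, b₁; 1, 0, b₁; 0, 0, a₂]))}

/-- The scalar pairs: the lifts of the identity of `PGL₂ × PGL₃`. -/
def scalarPairs : Set (GL (Fin 2) ℂ × GL (Fin 3) ℂ) :=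
  {g | ∃ (c d : ℂ), c ≠ 0 ∧ d ≠ 0 ∧
    (g.1 : Matrix (Fin 2) (Fin 2) ℂ) = c • (1 : Matrix (Fin 2) (Fin 2) ℂ) ∧
    (g.2 : Matrix (Fin 3) (Fin 3) ℂ) = d • (1 : Matrix (Fin 3) (Fin 3) ℂ)}

/-- The `G_m`-generators: `(I₂, diag(1,1,a))`, `a ∈ ℂ*`. -/
def gmGens : Set (GL (Fin 2) ℂ × GL (Fin 3) ℂ) :=
  {g | ∃ a : ℂ, a ≠ 0 ∧
    (g.1 : Matrix (Fin 2) (Fin 2) ℂ) = (1 : Matrix (Fin 2) (Fin 2) ℂ) ∧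
    (g.2 : Matrix (Fin 3) (Fin 3) ℂ) = !![1, 0, 0; 0, 1, 0; 0, 0, a]}

/-- The `G_a`-generators: `(I₂, [[1,0,b],[0,1,b],[0,0,1]])`, `b ∈ ℂ`. -/
def gaGens : Set (GL (Fin 2) ℂ × GL (Fin 3) ℂ) :=
  {g | ∃ b : ℂ,
    (g.1 : Matrix (Fin 2) (Fin 2) ℂ) = (1 : Matrix (Fin 2) (Fin 2) ℂ) ∧
    (g.2 : Matrix (Fin 3) (Fin 3) ℂ) = !![1, 0, b; 0, 1, b; 0, 0, 1]}

/-- The `ℤ/2`-generator: `([[0,1],[1,0]], [[0,1,0],[1,0,0],[0,0,1]])`. -/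
def invGens : Set (GL (Fin 2) ℂ × GL (Fin 3) ℂ) :=
  {g | (g.1 : Matrix (Fin 2) (Fin 2) ℂ) = !![0, 1; 1, 0] ∧
    (g.2 : Matrix (Fin 3) (Fin 3) ℂ) = !![0, 1, 0; 1, 0, 0; 0, 0, 1]}

/-!
Inside `G`, asking `B` to map the points `[1:1:0]` and `[0:0:1]` of `m` into `m` says exactly
`a₁ = 1` and `b₁ = b₂`, i.e. forms (a)/(b); conversely these matrices, and their inverses, map `m`
into itself.

For the group structure, send `((e, β), a) ∈ (ℤ/2 × G_a) ⋊ G_m` to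
`(Sᵉ, Sᵉ · N(β) · diag(1, 1, a))`, where `S` swaps the first two coordinates and
`N(β) = [[1,0,β],[0,1,β],[0,0,1]]`; conjugation by `diag(1, 1, a)` turns `N(β)` into `N(a⁻¹β)`,
which is the action defining the semidirect product. Multiplying this representation by the
central scalar pairs gives an injective homomorphism whose image is the set of lifts of (a)/(b).
This makes `Γ` a subgroup, projecting onto the semidirect product with kernel the scalars, and the
factorisation `((e, β), a) = (e, 0) · (0, β) · a` gives the generators.
-/

open Matrix Set

lemma matAct_mk {n : ℕ} (A : GL (Fin n) ℂ) {v : Fin n → ℂ} (hv : v ≠ 0) :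
    matAct A (.mk ℂ v hv) = .mk ℂ ((A : Matrix (Fin n) (Fin n) ℂ) *ᵥ v)
      (((mulVec_injective_iff_isUnit.2 A.isUnit).ne_iff' (mulVec_zero _)).2 hv) :=
  rfl

lemma matAct_matAct_inv {n : ℕ} (A : GL (Fin n) ℂ) (p : Projectivization ℂ (Fin n → ℂ)) :
    matAct A (matAct A⁻¹ p) = p := by
  induction p using Projectivization.ind with
  | h v hv =>
    simp only [matAct_mk, mulVec_mulVec, ← Units.val_mul, mul_inv_cancel, Units.val_one,
      one_mulVec]

lemma image_matAct_eq_of_mapsTo {n : ℕ} {A : GL (Fin n) ℂ}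
    {S : Set (Projectivization ℂ (Fin n → ℂ))}
    (h : MapsTo (matAct A) S S) (h' : MapsTo (matAct A⁻¹) S S) : matAct A '' S = S :=
  h.image_subset.antisymm fun p hp => ⟨_, h' hp, matAct_matAct_inv A p⟩

namespace LineStab

def scaleAction : ℂˣ →* MulAut (Multiplicative (ZMod 2) × Multiplicative ℂ) where
  toFun a :=
    { toFun p := (p.1, .ofAdd (a⁻¹ • p.2.toAdd))
      invFun p := (p.1, .ofAdd (a • p.2.toAdd))
      left_inv p := by simp
      right_inv p := by simp
      map_mul' p q := by simp [smul_add, ofAdd_add] }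
  map_one' := by ext p <;> simp
  map_mul' a b := by ext p <;> simp [mul_smul, mul_comm]

lemma scaleAction_apply (a : ℂˣ) (p : Multiplicative (ZMod 2) × Multiplicative ℂ) :
    scaleAction a p = (p.1, .ofAdd (a⁻¹ • p.2.toAdd)) :=
  rfl

abbrev ΓModScalars := (Multiplicative (ZMod 2) × Multiplicative ℂ) ⋊[scaleAction] ℂˣ

abbrev swap : Multiplicative (ZMod 2) := .ofAdd 1

lemma eq_one_or_eq_swap : ∀ e : Multiplicative (ZMod 2), e = 1 ∨ e = swap := by decide

lemma swap_mul_swap : swap * swap = 1 := rfl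

lemma swap_ne_one : swap ≠ 1 := by decide

def matA (e : Multiplicative (ZMod 2)) : Matrix (Fin 2) (Fin 2) ℂ :=
  if e = 1 then 1 else !![0, 1; 1, 0]

def matB (e : Multiplicative (ZMod 2)) (b a : ℂ) : Matrix (Fin 3) (Fin 3) ℂ :=
  if e = 1 then !![1, 0, b; 0, 1, b; 0, 0, a] else !![0, 1, b; 1, 0, b; 0, 0, a]

lemma matA_mul (e e' : Multiplicative (ZMod 2)) : matA e * matA e' = matA (e * e') := by
  rcases eq_one_or_eq_swap e with rfl | rfl <;> rcases eq_one_or_eq_swap e' with rfl | rfl <;>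
    simp [matA, Matrix.one_fin_two, swap_mul_swap]

lemma matB_mul (e e' : Multiplicative (ZMod 2)) (b a b' a' : ℂ) :
    matB e b a * matB e' b' a' = matB (e * e') (b' + b * a') (a * a') := by
  rcases eq_one_or_eq_swap e with rfl | rfl <;> rcases eq_one_or_eq_swap e' with rfl | rfl <;>
    simp [matB, swap_mul_swap]

def repA : ΓModScalars →* Matrix (Fin 2) (Fin 2) ℂ where
  toFun x := matA x.left.1
  map_one' := by simp [matA]
  map_mul' x y := by simp [matA_mul, scaleAction_apply]

def repB : ΓModScalars →* Matrix (Fin 3) (Fin 3) ℂ where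
  toFun x := matB x.left.1 (x.left.2.toAdd * x.right) x.right
  map_one' := by simp [matB, Matrix.one_fin_three]
  map_mul' x y := by
    rw [matB_mul]
    simp only [SemidirectProduct.mul_left, SemidirectProduct.mul_right, Prod.fst_mul, Prod.snd_mul,
      scaleAction_apply, toAdd_mul, toAdd_ofAdd, Units.smul_def, smul_eq_mul, Units.val_mul,
      Units.val_inv_eq_inv_val]
    congr 1
    field_simp
    ring

def rep : ΓModScalars →* GL (Fin 2) ℂ × GL (Fin 3) ℂ := repA.toHomUnits.prod repB.toHomUnits

lemma rep_fst_val (x : ΓModScalars) : ((rep x).1 : Matrix (Fin 2) (Fin 2) ℂ) = repA x := rfl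

lemma rep_snd_val (x : ΓModScalars) : ((rep x).2 : Matrix (Fin 3) (Fin 3) ℂ) = repB x := rfl

lemma mem_center_iff_mem_scalarPairs {z : GL (Fin 2) ℂ × GL (Fin 3) ℂ} :
    z ∈ Subgroup.center _ ↔ z ∈ scalarPairs := by
  simp only [Subgroup.center_prod, Subgroup.mem_prod,
    GeneralLinearGroup.mem_center_iff_val_mem_range_scalar, Set.mem_range, scalar_apply,
    ← smul_one_eq_diagonal]
  constructor
  · rintro ⟨⟨c, hc⟩, ⟨d, hd⟩⟩
    refine ⟨c, d, ?_, ?_, hc.symm, hd.symm⟩ <;> rintro rfl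
    · exact z.1.ne_zero (by simpa using hc.symm)
    · exact z.2.ne_zero (by simpa using hd.symm)
  · rintro ⟨c, d, -, -, hc, hd⟩
    exact ⟨⟨c, hc.symm⟩, ⟨d, hd.symm⟩⟩

lemma eq_one_of_rep_mem_center {x : ΓModScalars} (hx : rep x ∈ Subgroup.center _) : x = 1 := by
  obtain ⟨-, d, -, -, -, hB⟩ := mem_center_iff_mem_scalarPairs.mp hx
  rw [rep_snd_val] at hB
  obtain ⟨⟨e, β⟩, a⟩ := x
  obtain rfl : e = 1 := by
    rcases eq_one_or_eq_swap e with he | rfl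
    · exact he
    · simpa [repB, matB, swap_ne_one] using congrFun₂ hB 0 1
  have hd : 1 = d := by simpa [repB, matB] using congrFun₂ hB 0 0
  have hβ : β = 1 := by simpa [repB, matB] using congrFun₂ hB 0 2
  have ha : (a : ℂ) = d := by simpa [repB, matB] using congrFun₂ hB 2 2
  subst hd hβ
  exact SemidirectProduct.ext rfl (Units.ext ha)

def repMulCenter : ΓModScalars × Subgroup.center (GL (Fin 2) ℂ × GL (Fin 3) ℂ) →*
    GL (Fin 2) ℂ × GL (Fin 3) ℂ :=
  rep.noncommCoprod (Subgroup.center _).subtype fun x z => Subgroup.mem_center_iff.mp z.2 (rep x)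

lemma repMulCenter_apply (p : ΓModScalars × Subgroup.center (GL (Fin 2) ℂ × GL (Fin 3) ℂ)) :
    repMulCenter p = rep p.1 * p.2 := rfl

lemma repMulCenter_injective : Function.Injective repMulCenter := by
  refine (injective_iff_map_eq_one _).mpr fun ⟨x, z⟩ h => ?_
  rw [repMulCenter_apply] at h
  have hx : rep x = (z : GL (Fin 2) ℂ × GL (Fin 3) ℂ)⁻¹ := eq_inv_of_mul_eq_one_left h
  obtain rfl : x = 1 := eq_one_of_rep_mem_center (hx ▸ inv_mem z.2)
  simpa using h

lemma mem_ΓSet_iff {g : GL (Fin 2) ℂ × GL (Fin 3) ℂ} :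
    g ∈ ΓSet ↔ ∃ (x : ΓModScalars) (c d : ℂ), c ≠ 0 ∧ d ≠ 0 ∧
      (g.1 : Matrix (Fin 2) (Fin 2) ℂ) = c • repA x ∧
      (g.2 : Matrix (Fin 3) (Fin 3) ℂ) = d • repB x := by
  constructor
  · rintro ⟨a, b, c, d, ha, hc, hd, ⟨h1, h2⟩ | ⟨h1, h2⟩⟩
    · refine ⟨⟨(1, .ofAdd (b / a)), Units.mk0 a ha⟩, c, d, hc, hd, ?_, ?_⟩ <;>
        simp [repA, repB, matA, matB, h1, h2, div_mul_cancel₀ _ ha]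
    · refine ⟨⟨(swap, .ofAdd (b / a)), Units.mk0 a ha⟩, c, d, hc, hd, ?_, ?_⟩ <;>
        simp [repA, repB, matA, matB, h1, h2, div_mul_cancel₀ _ ha]
  · rintro ⟨⟨⟨e, β⟩, a⟩, c, d, hc, hd, h1, h2⟩
    rcases eq_one_or_eq_swap e with rfl | rfl
    · exact ⟨a, β.toAdd * a, c, d, a.ne_zero, hc, hd,
        .inl ⟨by simpa [repA, matA] using h1, by simpa [repB, matB] using h2⟩⟩
    · exact ⟨a, β.toAdd * a, c, d, a.ne_zero, hc, hd,
        .inr ⟨by simpa [repA, matA, swap_ne_one] using h1,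
          by simpa [repB, matB, swap_ne_one] using h2⟩⟩

lemma coe_range_repMulCenter :
    (repMulCenter.range : Set (GL (Fin 2) ℂ × GL (Fin 3) ℂ)) = ΓSet := by
  ext g
  constructor
  · rintro ⟨⟨x, z⟩, rfl⟩
    obtain ⟨c, d, hc, hd, h1, h2⟩ := mem_center_iff_mem_scalarPairs.mp z.2
    exact mem_ΓSet_iff.mpr ⟨x, c, d, hc, hd, by simp [repMulCenter_apply, rep_fst_val, h1],
      by simp [repMulCenter_apply, rep_snd_val, h2]⟩
  · intro hg
    obtain ⟨x, c, d, hc, hd, h1, h2⟩ := mem_ΓSet_iff.mp hg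
    refine ⟨(x, ⟨(rep x)⁻¹ * g, mem_center_iff_mem_scalarPairs.mpr ⟨c, d, hc, hd, ?_, ?_⟩⟩), ?_⟩
    · simp [← map_inv, rep_fst_val, h1, ← map_mul]
    · simp [← map_inv, rep_snd_val, h2, ← map_mul]
    · simp [repMulCenter_apply]

lemma inv_mem_ΓSet {g : GL (Fin 2) ℂ × GL (Fin 3) ℂ} (hg : g ∈ ΓSet) : g⁻¹ ∈ ΓSet := by
  rw [← coe_range_repMulCenter] at hg ⊢
  exact inv_mem hg

abbrev generators : Set (GL (Fin 2) ℂ × GL (Fin 3) ℂ) := scalarPairs ∪ gmGens ∪ gaGens ∪ invGens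

lemma generators_subset_ΓSet : generators ⊆ ΓSet := by
  rintro g (((⟨c, d, hc, hd, h1, h2⟩ | ⟨a, ha, h1, h2⟩) | ⟨b, h1, h2⟩) | ⟨h1, h2⟩)
  · exact ⟨1, 0, c, d, one_ne_zero, hc, hd, .inl ⟨h1, by rw [h2, Matrix.one_fin_three]⟩⟩
  · exact ⟨a, 0, 1, 1, ha, one_ne_zero, one_ne_zero, .inl ⟨by simp [h1], by simp [h2]⟩⟩
  · exact ⟨1, b, 1, 1, one_ne_zero, one_ne_zero, one_ne_zero, .inl ⟨by simp [h1], by simp [h2]⟩⟩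
  · exact ⟨1, 0, 1, 1, one_ne_zero, one_ne_zero, one_ne_zero, .inr ⟨by simp [h1], by simp [h2]⟩⟩

lemma rep_mem_closure (x : ΓModScalars) : rep x ∈ Subgroup.closure generators := by
  rw [← SemidirectProduct.inl_left_mul_inr_right x, ← Prod.fst_mul_snd x.left]
  simp only [map_mul]
  refine mul_mem (mul_mem ?_ (Subgroup.subset_closure (.inl (.inr ?_))))
    (Subgroup.subset_closure (.inl (.inl (.inr ?_))))
  · rcases eq_one_or_eq_swap x.left.1 with he | he
    · rw [he, Prod.mk_one_one, map_one, map_one]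
      exact one_mem _
    · exact Subgroup.subset_closure (.inr ⟨by simp [rep_fst_val, repA, matA, he],
        by simp [rep_snd_val, repB, matB, he]⟩)
  · exact ⟨x.left.2.toAdd, by simp [rep_fst_val, repA, matA], by simp [rep_snd_val, repB, matB]⟩
  · exact ⟨x.right, x.right.ne_zero, by simp [rep_fst_val, repA, matA],
      by simp [rep_snd_val, repB, matB]⟩

lemma range_repMulCenter_eq_closure : repMulCenter.range = Subgroup.closure generators := by
  refine le_antisymm ?_ ((Subgroup.closure_le _).mpr ?_)
  · rintro _ ⟨⟨x, z⟩, rfl⟩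
    exact mul_mem (rep_mem_closure x)
      (Subgroup.subset_closure (.inl (.inl (.inl (mem_center_iff_mem_scalarPairs.mp z.2)))))
  · rw [coe_range_repMulCenter]
    exact generators_subset_ΓSet

def proj : repMulCenter.range →* ΓModScalars :=
  (MonoidHom.fst _ _).comp (MonoidHom.ofInjective repMulCenter_injective).symm.toMonoidHom

lemma proj_surjective : Function.Surjective proj :=
  Prod.fst_surjective.comp (MonoidHom.ofInjective repMulCenter_injective).symm.surjective

lemma proj_eq_one_iff (g : repMulCenter.range) :
    proj g = 1 ↔ (g : GL (Fin 2) ℂ × GL (Fin 3) ℂ) ∈ scalarPairs := by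
  rw [← mem_center_iff_mem_scalarPairs]
  have hproj : proj g = ((MonoidHom.ofInjective repMulCenter_injective).symm g).1 := rfl
  constructor
  · intro h
    rw [← MonoidHom.apply_ofInjective_symm repMulCenter_injective g, repMulCenter_apply, ← hproj,
      h, map_one, one_mul]
    exact Subtype.prop _
  · intro hg
    have : (MonoidHom.ofInjective repMulCenter_injective).symm g = (1, ⟨g, hg⟩) :=
      (MulEquiv.symm_apply_eq _).mpr
        (Subtype.ext (by simp [MonoidHom.ofInjective_apply, repMulCenter_apply]))
    rw [hproj, this]

lemma mk_mem_mline_iff {v : Fin 3 → ℂ} (hv : v ≠ 0) :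
    Projectivization.mk ℂ v hv ∈ mline ↔ v 0 = v 1 := by
  obtain ⟨a, ha⟩ := Projectivization.exists_smul_eq_mk_rep ℂ v hv
  change (Projectivization.mk ℂ v hv).rep 0 = (Projectivization.mk ℂ v hv).rep 1 ↔ _
  simp only [← ha, Pi.smul_apply, smul_left_cancel_iff]

lemma mapsTo_mline_iff (B : GL (Fin 3) ℂ) :
    MapsTo (matAct B) mline mline ↔
      ∀ v : Fin 3 → ℂ, v 0 = v 1 →
        ((B : Matrix (Fin 3) (Fin 3) ℂ) *ᵥ v) 0 = ((B : Matrix (Fin 3) (Fin 3) ℂ) *ᵥ v) 1 := by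
  constructor
  · intro h v hv
    by_cases h0 : v = 0
    · simp [h0]
    · simpa only [matAct_mk, mk_mem_mline_iff] using h ((mk_mem_mline_iff h0).mpr hv)
  · intro h p hp
    induction p using Projectivization.ind with
    | h v hv =>
      rw [mk_mem_mline_iff] at hp
      rw [matAct_mk, mk_mem_mline_iff]
      exact h v hp

lemma mapsTo_mline_of_mem_ΓSet {g : GL (Fin 2) ℂ × GL (Fin 3) ℂ} (hg : g ∈ ΓSet) :
    MapsTo (matAct g.2) mline mline := by
  rw [mapsTo_mline_iff]
  intro v hv
  obtain ⟨a, b, c, d, -, -, -, ⟨-, h⟩ | ⟨-, h⟩⟩ := hg <;>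
    simp [h, Matrix.mulVec, dotProduct, Fin.sum_univ_three, hv]

lemma image_mline_eq_of_mem_ΓSet {g : GL (Fin 2) ℂ × GL (Fin 3) ℂ} (hg : g ∈ ΓSet) :
    matAct g.2 '' mline = mline :=
  image_matAct_eq_of_mapsTo (mapsTo_mline_of_mem_ΓSet hg) <| by
    simpa only [Prod.snd_inv] using mapsTo_mline_of_mem_ΓSet (inv_mem_ΓSet hg)

lemma mem_ΓSet_of_mapsTo {g : GL (Fin 2) ℂ × GL (Fin 3) ℂ} (hg : g ∈ Ggrp)
    (hm : MapsTo (matAct g.2) mline mline) : g ∈ ΓSet := by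
  rw [mapsTo_mline_iff] at hm
  obtain ⟨a₁, a₂, b₁, b₂, c, d, -, ha₂, hc, hd, hAB⟩ := hg
  have ha₁ : a₁ = 1 := by
    rcases hAB with ⟨-, hB⟩ | ⟨-, hB⟩ <;>
      simpa [hB, mulVec, dotProduct, Fin.sum_univ_three, hd] using hm ![1, 1, 0] rfl
  have hb : b₁ = b₂ := by
    rcases hAB with ⟨-, hB⟩ | ⟨-, hB⟩ <;>
      simpa [hB, mulVec, dotProduct, Fin.sum_univ_three, hd] using hm ![0, 0, 1] rfl
  subst ha₁ hb
  refine ⟨a₂, b₁, c, d, ha₂, hc, hd, ?_⟩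
  simpa [Matrix.one_fin_two] using hAB

end LineStab

open LineStab

/-- An element `(A,B) ∈ G` preserves the line `m = {y₁ = y₂}` iff it
is represented by matrices of the forms (a) or (b); these elements form a subgroup `Γ`
which, modulo scalars, is isomorphic to `(ℤ/2 × G_a) ⋊ G_m` and is generated (modulo
scalars) by the `G_m`-, `G_a`- and `ℤ/2`-elements listed above. -/
theorem stabilizer_of_line_m :
    -- the characterization of Γ inside G:
    (∀ g ∈ Ggrp, (matAct g.2 '' mline = mline ↔ g ∈ ΓSet)) ∧
    -- Γ is a subgroup (of the group of matrix lifts), generated by the scalar pairs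
    -- together with the three families of elements above:
    (∃ Γ : Subgroup (GL (Fin 2) ℂ × GL (Fin 3) ℂ),
      (Γ : Set (GL (Fin 2) ℂ × GL (Fin 3) ℂ)) = ΓSet ∧
      Γ = Subgroup.closure (scalarPairs ∪ gmGens ∪ gaGens ∪ invGens) ∧
      -- modulo scalars, Γ is isomorphic to (ℤ/2 × G_a) ⋊ G_m:
      ∃ (φ : ℂˣ →* MulAut (Multiplicative (ZMod 2) × Multiplicative ℂ))
        (π : Γ →* SemidirectProduct (Multiplicative (ZMod 2) × Multiplicative ℂ) ℂˣ φ),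
        Function.Surjective π ∧ ∀ x : Γ, π x = 1 ↔ (x : GL (Fin 2) ℂ × GL (Fin 3) ℂ) ∈ scalarPairs) := by
  refine ⟨fun g hg => ⟨fun h => ?_, image_mline_eq_of_mem_ΓSet⟩, repMulCenter.range,
    coe_range_repMulCenter, range_repMulCenter_eq_closure, scaleAction, proj, proj_surjective,
    proj_eq_one_iff⟩
  exact mem_ΓSet_of_mapsTo hg fun _ hp => h ▸ mem_image_of_mem _ hp
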